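/- Let v be an additive valuation on a finite set M such that for some reals a > b ≥ 0 with b dividing a (i.e., a = k·b for a positive integer k, or b = 0), every item g satisfies v({g}) ∈ {a, b}. Then for any two disjoint bundles X_i and X_j, if v(X_i) ≥ v(X_j) − b, then v(X_i) ≥ μ(X_i ∪ X_j), where μ(S) = max over partitions (A,B) of S of min(v(A), v(B)). -/

import Mathlib

open Finset

/-- Additive valuation induced by real item values. -/
def addVal {α : Type*} (w : α → ℝ) (S : Finset α) : ℝ := ∑ g ∈ S, w g

/-- Two-part maximin share: max over partitions (A, S \ A) of S of the min value. -/
noncomputable def mu {α : Type*} [DecidableEq α] (v : Finset α → ℝ) (S : Finset α) : ℝ :=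
  S.powerset.sup' ⟨∅, Finset.empty_mem_powerset S⟩ fun A => min (v A) (v (S \ A))

/-!
When `a = k b`, every item value is a natural multiple of `b`, hence so is the value of every bundle and, the
maximin share being attained by some partition, so is `μ(X_i ∪ X_j)`. Any partition has a part
worth at most half of `v(X_i) + v(X_j) ≤ 2 v(X_i) + b`, so `μ(X_i ∪ X_j) ≤ v(X_i) + b / 2`;
between two multiples of `b` this slack of `b / 2` cannot be used. When `b = 0` the half-bound
is already the claim.
-/

section

variable {α : Type*}

lemma addVal_union [DecidableEq α] (w : α → ℝ) {s t : Finset α} (hst : Disjoint s t) :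
    addVal w (s ∪ t) = addVal w s + addVal w t :=
  sum_union hst

lemma addVal_add_addVal_sdiff [DecidableEq α] (w : α → ℝ) {A S : Finset α} (hA : A ⊆ S) :
    addVal w A + addVal w (S \ A) = addVal w S := by
  rw [add_comm]
  exact sum_sdiff hA

lemma mu_addVal_le_half [DecidableEq α] (w : α → ℝ) (S : Finset α) : mu (addVal w) S ≤ addVal w S / 2 := by
  refine sup'_le _ _ fun A hA => ?_
  have hsum := addVal_add_addVal_sdiff w (mem_powerset.mp hA)
  have := min_le_left (addVal w A) (addVal w (S \ A))
  have := min_le_right (addVal w A) (addVal w (S \ A))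
  linarith

lemma exists_mu_eq_min [DecidableEq α] (v : Finset α → ℝ) (S : Finset α) :
    ∃ A ∈ S.powerset, mu v S = min (v A) (v (S \ A)) :=
  exists_mem_eq_sup' _ _

lemma exists_addVal_eq_nat_mul {w : α → ℝ} {b : ℝ} (hw : ∀ g, ∃ n : ℕ, w g = n * b)
    (T : Finset α) : ∃ n : ℕ, addVal w T = n * b := by
  choose f hf using hw
  exact ⟨∑ g ∈ T, f g, by simp only [addVal, hf, Nat.cast_sum, sum_mul]⟩

lemma exists_mu_addVal_eq_nat_mul [DecidableEq α] {w : α → ℝ} {b : ℝ} (hw : ∀ g, ∃ n : ℕ, w g = n * b)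
    (S : Finset α) : ∃ n : ℕ, mu (addVal w) S = n * b := by
  obtain ⟨A, -, hA⟩ := exists_mu_eq_min (addVal w) S
  rcases min_choice (addVal w A) (addVal w (S \ A)) with h | h <;> rw [hA, h]
  · exact exists_addVal_eq_nat_mul hw A
  · exact exists_addVal_eq_nat_mul hw (S \ A)

end

lemma nat_mul_le_of_le_add_half {b : ℝ} (hb : 0 ≤ b) {n m : ℕ} (h : n * b ≤ m * b + b / 2) :
    (n : ℝ) * b ≤ m * b := by
  rcases hb.eq_or_lt with rfl | hb
  · simp
  have hnm : (n : ℝ) < m + 1 := by nlinarith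
  have : n ≤ m := by exact_mod_cast Nat.lt_succ_iff.mp (by exact_mod_cast hnm)
  gcongr

theorem stmt1_general {α : Type*} [DecidableEq α] (a b : ℝ) (hb : 0 ≤ b)
    (hfac : (∃ k : ℕ, 0 < k ∧ a = k * b) ∨ b = 0)
    (w : α → ℝ) (hw : ∀ g, w g = a ∨ w g = b)
    (Xi Xj : Finset α) (hdisj : Disjoint Xi Xj)
    (h : addVal w Xi ≥ addVal w Xj - b) :
    addVal w Xi ≥ mu (addVal w) (Xi ∪ Xj) := by
  have hhalf : mu (addVal w) (Xi ∪ Xj) ≤ addVal w Xi + b / 2 := by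
    have := mu_addVal_le_half w (Xi ∪ Xj)
    rw [addVal_union w hdisj] at this
    linarith
  rcases hfac with ⟨k, -, rfl⟩ | rfl
  · have hw' : ∀ g, ∃ n : ℕ, w g = n * b := fun g =>
      (hw g).elim (fun hg => ⟨k, hg⟩) (fun hg => ⟨1, by rw [hg, Nat.cast_one, one_mul]⟩)
    obtain ⟨n, hn⟩ := exists_mu_addVal_eq_nat_mul hw' (Xi ∪ Xj)
    obtain ⟨m, hm⟩ := exists_addVal_eq_nat_mul hw' Xi
    rw [hn, hm] at hhalf ⊢
    exact nat_mul_le_of_le_add_half hb hhalf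
  · simpa using hhalf

theorem stmt1 {α : Type*} [DecidableEq α] (a b : ℝ) (hab : b < a) (hb : 0 ≤ b)
    (hfac : (∃ k : ℕ, 0 < k ∧ a = k * b) ∨ b = 0)
    (w : α → ℝ) (hw : ∀ g, w g = a ∨ w g = b)
    (Xi Xj : Finset α) (hdisj : Disjoint Xi Xj)
    (h : addVal w Xi ≥ addVal w Xj - b) :
    addVal w Xi ≥ mu (addVal w) (Xi ∪ Xj) :=
  stmt1_general a b hb hfac w hw Xi Xj hdisj h
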